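/- arXiv:1703.08775 — 3 statements merged into one kernel-verified Lean document; each statement's English description precedes it below -/
import Mathlib

section
/- There exist ρ ∈ (0,1) and C > 0 such that for all finitely supported f, g : ℤ → ℂ there is a ρ-sparse collection 𝒮 of discrete intervals with ∑_{n ∈ ℤ} M_HL f(n) · |g(n)| ≤ C · Λ_{𝒮,1,1}(f,g); that is, the discrete Hardy–Littlewood maximal function satisfies a (1,1) sparse bound. -/
/-!
Fix `n` with `MHL f n > 0` and the dyadic level `2 ^ k < MHL f n ≤ 2 ^ (k + 1)`. Then `n` lies in a
maximal interval `S` of the superlevel set `{M f > 2 ^ k}` of the uncentered maximal function, and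
the Vitali covering lemma inside `S` gives `2 ^ k |S| ≤ 3 ∑_S |f|`, so `MHL f n ≤ 6 ⟨f⟩_S`.
Since the average of `|f|` over `S` enlarged by one point on each side is at most `2 ^ k`, we get
`∑_S |f| ≤ 3 · 2 ^ k |S|`, and the same weak type bound leaves at least `7/16` of `S` in
`E_S = S ∩ {M f ≤ 16 · 2 ^ k}`.
A point `x ∈ E_S ∩ E_S'` forces the levels of `S` and `S'` to differ by less than `4`, and
components of one level are disjoint, so at most `7` of the sets `E_S` contain `x`.
-/

noncomputable section

/-- `e(t) = exp(2πi t)`. -/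
def e (t : ℝ) : ℂ := Complex.exp (2 * Real.pi * Complex.I * t)

/-- A discrete interval is a set of the form `ℤ ∩ [a,b]`. -/
def IsDiscreteInterval (S : Finset ℤ) : Prop := ∃ a b : ℤ, a ≤ b ∧ S = Finset.Icc a b

/-- The `L^r` average of `f` over a discrete interval `S`. -/
def avg (r : ℝ) (f : ℤ → ℂ) (S : Finset ℤ) : ℝ :=
  ((S.card : ℝ)⁻¹ * ∑ x ∈ S, ‖f x‖ ^ r) ^ (1 / r)

/-- The collection `𝒮`, with distinguished subsets `E S ⊆ S`, is `ρ`-sparse. -/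
def IsSparse (ρ : ℝ) (𝒮 : Finset (Finset ℤ)) (E : Finset ℤ → Finset ℤ) : Prop :=
  (∀ S ∈ 𝒮, IsDiscreteInterval S) ∧
  (∀ S ∈ 𝒮, E S ⊆ S ∧ ρ * (S.card : ℝ) < ((E S).card : ℝ)) ∧
  (∀ x : ℤ, ((𝒮.filter (fun S => x ∈ E S)).card : ℝ) ≤ ρ⁻¹)

/-- The sparse bilinear form `Λ_{𝒮,r,s}(f,g)`. -/
def sparseForm (r s : ℝ) (𝒮 : Finset (Finset ℤ)) (f g : ℤ → ℂ) : ℝ :=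
  ∑ S ∈ 𝒮, avg r f S * avg s g S * (S.card : ℝ)

/-- The pairing `⟨F, g⟩ = ∑ₙ F(n) conj(g(n))`. -/
def pairing (F g : ℤ → ℂ) : ℂ := ∑' n : ℤ, F n * (starRingEnd ℂ) (g n)

/-- The discrete Hardy–Littlewood maximal function. -/
def MHL (f : ℤ → ℂ) (n : ℤ) : ℝ :=
  ⨆ N : ℕ, (2 * (N : ℝ) + 1)⁻¹ * ∑ j ∈ Finset.Icc (-(N : ℤ)) (N : ℤ), ‖f (n - j)‖

namespace SparseBound

open Finset

lemma Icc_subset_enlarge_of_card_le {a b c d t : ℤ} (ht : t ∈ Icc c d) (ht' : t ∈ Icc a b)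
    (hcard : (Icc c d).card ≤ (Icc a b).card) :
    Icc c d ⊆ Icc (a - (b - a + 1)) (b + (b - a + 1)) := by
  simp only [mem_Icc, Int.card_Icc] at ht ht' hcard
  intro x hx
  simp only [mem_Icc] at hx ⊢
  omega

theorem exists_pairwiseDisjoint_card_biUnion_le (J : Finset (Finset ℤ))
    (hJ : ∀ I ∈ J, IsDiscreteInterval I) :
    ∃ D ⊆ J, (D : Set (Finset ℤ)).PairwiseDisjoint id ∧
      (J.biUnion id).card ≤ 3 * ∑ I ∈ D, I.card := by
  classical
  induction J using Finset.strongInduction with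
  | H J ih =>
  rcases J.eq_empty_or_nonempty with rfl | hne
  · exact ⟨∅, empty_subset _, by simp, by simp⟩
  -- Keep a longest interval `I₀`; every interval meeting it lies in its threefold enlargement.
  obtain ⟨I₀, hI₀J, hmax⟩ := J.exists_max_image card hne
  obtain ⟨a, b, hab, rfl⟩ := hJ _ hI₀J
  set J' := J.filter (Disjoint · (Icc a b))
  have hI₀J' : Icc a b ∉ J' := fun h =>
    (nonempty_Icc.mpr hab).ne_empty (disjoint_self.mp (mem_filter.mp h).2)
  obtain ⟨D, hDJ', hD, hcard⟩ := ih J'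
    ((ssubset_iff_of_subset (filter_subset _ _)).mpr ⟨_, hI₀J, hI₀J'⟩)
    (fun I hI => hJ I (filter_subset _ _ hI))
  have hcover : J.biUnion id ⊆ J'.biUnion id ∪ Icc (a - (b - a + 1)) (b + (b - a + 1)) := by
    intro x hx
    obtain ⟨I, hIJ, hxI⟩ := mem_biUnion.mp hx
    by_cases hdisj : Disjoint I (Icc a b)
    · exact mem_union_left _ (mem_biUnion.mpr ⟨I, mem_filter.mpr ⟨hIJ, hdisj⟩, hxI⟩)
    · obtain ⟨t, htI, htI₀⟩ := not_disjoint_iff.mp hdisj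
      obtain ⟨c, d, -, rfl⟩ := hJ I hIJ
      exact mem_union_right _ (Icc_subset_enlarge_of_card_le htI htI₀ (hmax _ hIJ) hxI)
  refine ⟨insert (Icc a b) D, insert_subset hI₀J (hDJ'.trans (filter_subset _ _)), ?_, ?_⟩
  · rw [coe_insert]
    exact hD.insert fun I hI _ => ((mem_filter.mp (hDJ' hI)).2).symm
  · rw [sum_insert fun h => hI₀J' (hDJ' h)]
    have h3 : (Icc (a - (b - a + 1)) (b + (b - a + 1))).card = 3 * (Icc a b).card := by
      simp only [Int.card_Icc]
      omega
    calc (J.biUnion id).card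
        ≤ (J'.biUnion id).card + (Icc (a - (b - a + 1)) (b + (b - a + 1))).card :=
          (card_le_card hcover).trans (card_union_le _ _)
      _ ≤ 3 * ((Icc a b).card + ∑ I ∈ D, I.card) := by omega

theorem mul_card_biUnion_le {w : ℤ → ℝ} (hw : ∀ x, 0 ≤ w x) {μ : ℝ} (hμ : 0 ≤ μ)
    {S : Finset ℤ} {J : Finset (Finset ℤ)}
    (hJ : ∀ I ∈ J, IsDiscreteInterval I ∧ I ⊆ S ∧ μ * I.card ≤ ∑ x ∈ I, w x) :
    μ * (J.biUnion id).card ≤ 3 * ∑ x ∈ S, w x := by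
  classical
  obtain ⟨D, hDJ, hD, hcard⟩ := exists_pairwiseDisjoint_card_biUnion_le J fun I hI => (hJ I hI).1
  have hcard' : ((J.biUnion id).card : ℝ) ≤ 3 * ∑ I ∈ D, (I.card : ℝ) := by exact_mod_cast hcard
  calc μ * (J.biUnion id).card ≤ 3 * ∑ I ∈ D, μ * I.card := by
        rw [← mul_sum]; nlinarith
    _ ≤ 3 * ∑ I ∈ D, ∑ x ∈ I, w x := by
        gcongr with I hI; exact (hJ I (hDJ hI)).2.2
    _ = 3 * ∑ x ∈ D.biUnion id, w x := by rw [sum_biUnion hD]; rfl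
    _ ≤ 3 * ∑ x ∈ S, w x := by
        gcongr
        · exact fun x _ _ => hw x
        · exact biUnion_subset.mpr fun I hI => (hJ I (hDJ hI)).2.1

variable {f : ℤ → ℂ}

def UncenteredMaxGT (f : ℤ → ℂ) (lam : ℝ) (n : ℤ) : Prop :=
  ∃ I, IsDiscreteInterval I ∧ n ∈ I ∧ lam * I.card < ∑ x ∈ I, ‖f x‖

/-- A maximal run of consecutive integers in the superlevel set `{UncenteredMaxGT f lam}`. -/
def IsSuperlevelComponent (f : ℤ → ℂ) (lam : ℝ) (S : Finset ℤ) : Prop :=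
  ∃ a b : ℤ, a ≤ b ∧ S = Icc a b ∧ (∀ x ∈ S, UncenteredMaxGT f lam x) ∧
    ¬ UncenteredMaxGT f lam (a - 1) ∧ ¬ UncenteredMaxGT f lam (b + 1)

lemma UncenteredMaxGT.mono {lam lam' : ℝ} {n : ℤ} (h : UncenteredMaxGT f lam n)
    (hle : lam' ≤ lam) : UncenteredMaxGT f lam' n := by
  obtain ⟨I, hI, hnI, hsum⟩ := h
  exact ⟨I, hI, hnI, lt_of_le_of_lt (by gcongr) hsum⟩

lemma exists_forall_uncenteredMaxGT_abs_le (hf : (Function.support f).Finite) {lam : ℝ}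
    (hlam : 0 < lam) : ∃ R : ℤ, ∀ n, UncenteredMaxGT f lam n → |n| ≤ R := by
  classical
  set T := hf.toFinset
  obtain ⟨M, hM⟩ : ∃ M : ℤ, ∀ s ∈ T, |s| ≤ M :=
    ⟨∑ s ∈ T, |s|, fun s hs => single_le_sum (fun _ _ => abs_nonneg _) hs⟩
  -- An interval where `|f|` averages more than `lam` meets `supp f` and has `< ‖f‖₁ / lam` points.
  refine ⟨M + ⌈(∑ x ∈ T, ‖f x‖) / lam⌉, fun n ⟨I, ⟨a, b, hab, hI⟩, hnI, hsum⟩ => ?_⟩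
  subst hI
  have hsumT : ∑ x ∈ Icc a b, ‖f x‖ ≤ ∑ x ∈ T, ‖f x‖ := by
    rw [← sum_filter_ne_zero, ← sum_filter_ne_zero (s := T)]
    refine sum_le_sum_of_subset_of_nonneg (fun x hx => ?_) fun _ _ _ => norm_nonneg _
    simp only [mem_filter, norm_ne_zero_iff] at hx ⊢
    exact ⟨hf.mem_toFinset.mpr hx.2, hx.2⟩
  obtain ⟨s, hsI, hs⟩ : ∃ s ∈ Icc a b, f s ≠ 0 := by
    by_contra! h
    have : ∑ x ∈ Icc a b, ‖f x‖ = 0 := sum_eq_zero fun x hx => by simp [h x hx]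
    nlinarith [(Icc a b).card.cast_nonneg (α := ℝ)]
  have hlen : ((Icc a b).card : ℝ) ≤ ⌈(∑ x ∈ T, ‖f x‖) / lam⌉ := by
    refine (le_div_iff₀ hlam).mpr ?_ |>.trans (Int.le_ceil _)
    linarith
  have hMs := hM s (hf.mem_toFinset.mpr hs)
  rw [Int.card_Icc] at hlen
  simp only [mem_Icc] at hnI hsI
  have hlen' : ((b + 1 - a).toNat : ℤ) ≤ ⌈(∑ x ∈ T, ‖f x‖) / lam⌉ := by exact_mod_cast hlen
  rw [abs_le] at hMs ⊢
  omega

lemma exists_isSuperlevelComponent (hf : (Function.support f).Finite) {lam : ℝ} (hlam : 0 < lam)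
    {n : ℤ} (hn : UncenteredMaxGT f lam n) : ∃ S, IsSuperlevelComponent f lam S ∧ n ∈ S := by
  obtain ⟨R, hR⟩ := exists_forall_uncenteredMaxGT_abs_le hf hlam
  have hself : ∀ x ∈ Icc n n, UncenteredMaxGT f lam x := fun x hx => by
    rw [Icc_self, mem_singleton] at hx
    exact hx ▸ hn
  obtain ⟨a, ⟨han, ha⟩, hamin⟩ := Int.exists_least_of_bdd
    (P := fun a => a ≤ n ∧ ∀ x ∈ Icc a n, UncenteredMaxGT f lam x)
    ⟨-R, fun a ⟨han, ha⟩ => (abs_le.mp (hR a (ha a (mem_Icc.mpr ⟨le_rfl, han⟩)))).1⟩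
    ⟨n, le_rfl, hself⟩
  obtain ⟨b, ⟨hnb, hb⟩, hbmax⟩ := Int.exists_greatest_of_bdd
    (P := fun b => n ≤ b ∧ ∀ x ∈ Icc n b, UncenteredMaxGT f lam x)
    ⟨R, fun b ⟨hnb, hb⟩ => (abs_le.mp (hR b (hb b (mem_Icc.mpr ⟨hnb, le_rfl⟩)))).2⟩
    ⟨n, le_rfl, hself⟩
  have hab : ∀ x ∈ Icc a b, UncenteredMaxGT f lam x := fun x hx => by
    rw [mem_Icc] at hx
    rcases le_total x n with h | h
    · exact ha x (mem_Icc.mpr ⟨hx.1, h⟩)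
    · exact hb x (mem_Icc.mpr ⟨h, hx.2⟩)
  refine ⟨Icc a b, ⟨a, b, han.trans hnb, rfl, hab, fun h => ?_, fun h => ?_⟩,
    mem_Icc.mpr ⟨han, hnb⟩⟩
  · have := hamin (a - 1) ⟨by omega, fun x hx => ?_⟩
    · omega
    rcases eq_or_lt_of_le (mem_Icc.mp hx).1 with rfl | h'
    · exact h
    · exact ha x (mem_Icc.mpr ⟨by omega, (mem_Icc.mp hx).2⟩)
  · have := hbmax (b + 1) ⟨by omega, fun x hx => ?_⟩
    · omega
    rcases eq_or_lt_of_le (mem_Icc.mp hx).2 with rfl | h'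
    · exact h
    · exact hb x (mem_Icc.mpr ⟨(mem_Icc.mp hx).1, by omega⟩)

namespace IsSuperlevelComponent

variable {lam : ℝ} {S : Finset ℤ}

lemma eq_of_mem {S' : Finset ℤ} (h : IsSuperlevelComponent f lam S)
    (h' : IsSuperlevelComponent f lam S') {x : ℤ} (hx : x ∈ S) (hx' : x ∈ S') : S = S' := by
  obtain ⟨a, b, -, rfl, hP, hL, hR⟩ := h
  obtain ⟨a', b', -, rfl, hP', hL', hR'⟩ := h'
  simp only [mem_Icc] at hx hx'
  have ha : a = a' := by
    by_contra hne
    rcases lt_or_gt_of_ne hne with h | h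
    · exact hL' (hP _ (mem_Icc.mpr ⟨by omega, by omega⟩))
    · exact hL (hP' _ (mem_Icc.mpr ⟨by omega, by omega⟩))
  have hb : b = b' := by
    by_contra hne
    rcases lt_or_gt_of_ne hne with h | h
    · exact hR (hP' _ (mem_Icc.mpr ⟨by omega, by omega⟩))
    · exact hR' (hP _ (mem_Icc.mpr ⟨by omega, by omega⟩))
  rw [ha, hb]

lemma subset_of_mem {I : Finset ℤ} (hS : IsSuperlevelComponent f lam S)
    (hI : IsDiscreteInterval I) (hsum : lam * I.card < ∑ x ∈ I, ‖f x‖) {t : ℤ} (htI : t ∈ I)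
    (htS : t ∈ S) : I ⊆ S := by
  obtain ⟨a, b, -, rfl, -, hL, hR⟩ := hS
  obtain ⟨c, d, -, rfl⟩ := hI
  simp only [mem_Icc] at htI htS
  refine Icc_subset_Icc ?_ ?_ <;> by_contra! h
  · exact hL ⟨Icc c d, ⟨c, d, by omega, rfl⟩, mem_Icc.mpr ⟨by omega, by omega⟩, hsum⟩
  · exact hR ⟨Icc c d, ⟨c, d, by omega, rfl⟩, mem_Icc.mpr ⟨by omega, by omega⟩, hsum⟩

lemma one_le_card (hS : IsSuperlevelComponent f lam S) : (1 : ℝ) ≤ S.card := by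
  obtain ⟨a, b, hab, rfl, -⟩ := hS
  exact_mod_cast (nonempty_Icc.mpr hab).card_pos

lemma sum_le (hS : IsSuperlevelComponent f lam S) : ∑ x ∈ S, ‖f x‖ ≤ lam * (S.card + 2) := by
  obtain ⟨a, b, hab, rfl, -, hL, -⟩ := hS
  -- `Icc (a - 1) (b + 1)` contains `a - 1`, so `|f|` averages at most `lam` on it.
  have hL' : ¬ lam * (Icc (a - 1) (b + 1)).card < ∑ x ∈ Icc (a - 1) (b + 1), ‖f x‖ :=
    fun h => hL ⟨_, ⟨a - 1, b + 1, by omega, rfl⟩, mem_Icc.mpr ⟨le_rfl, by omega⟩, h⟩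
  have hcard : (Icc (a - 1) (b + 1)).card = (Icc a b).card + 2 := by
    simp only [Int.card_Icc]; omega
  calc ∑ x ∈ Icc a b, ‖f x‖ ≤ ∑ x ∈ Icc (a - 1) (b + 1), ‖f x‖ :=
        sum_le_sum_of_subset_of_nonneg (Icc_subset_Icc (by omega) (by omega))
          fun _ _ _ => norm_nonneg _
    _ ≤ lam * ((Icc a b).card + 2) := by
        rw [not_lt, hcard] at hL'; exact_mod_cast hL'

open scoped Classical in
lemma mul_card_filter_le (hS : IsSuperlevelComponent f lam S) {μ : ℝ} (hlμ : lam ≤ μ)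
    (hμ : 0 ≤ μ) : μ * (S.filter (UncenteredMaxGT f μ)).card ≤ 3 * ∑ x ∈ S, ‖f x‖ := by
  set J := S.powerset.filter fun I => IsDiscreteInterval I ∧ μ * I.card < ∑ x ∈ I, ‖f x‖
  have hJ : ∀ I ∈ J, IsDiscreteInterval I ∧ I ⊆ S ∧ μ * I.card ≤ ∑ x ∈ I, ‖f x‖ := by
    intro I hI
    simp only [J, mem_filter, mem_powerset] at hI
    exact ⟨hI.2.1, hI.1, hI.2.2.le⟩
  refine le_trans ?_ (mul_card_biUnion_le (fun _ => norm_nonneg _) hμ hJ)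
  gcongr
  intro x hx
  obtain ⟨hxS, I, hI, hxI, hsum⟩ := mem_filter.mp hx
  have hIS : I ⊆ S := hS.subset_of_mem hI (lt_of_le_of_lt (by gcongr) hsum) hxI hxS
  exact mem_biUnion.mpr ⟨I, mem_filter.mpr ⟨mem_powerset.mpr hIS, hI, hsum⟩, hxI⟩

lemma mul_card_le (hS : IsSuperlevelComponent f lam S) (hlam : 0 ≤ lam) :
    lam * S.card ≤ 3 * ∑ x ∈ S, ‖f x‖ := by
  classical
  have h := hS.mul_card_filter_le le_rfl hlam
  obtain ⟨a, b, -, rfl, hP, -⟩ := hS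
  rwa [filter_true_of_mem hP] at h

end IsSuperlevelComponent

lemma uncenteredMaxGT_of_lt_MHL {lam : ℝ} {n : ℤ} (h : lam < MHL f n) :
    UncenteredMaxGT f lam n := by
  obtain ⟨N, hN⟩ := exists_lt_of_lt_ciSup h
  have hcard : ((Icc (n - N) (n + N)).card : ℝ) = 2 * N + 1 := by
    rw [Int.card_Icc, show n + N + 1 - (n - N) = ((2 * N + 1 : ℕ) : ℤ) by push_cast; ring,
      Int.toNat_natCast]
    push_cast; ring
  have hsum : ∑ j ∈ Icc (-(N : ℤ)) N, ‖f (n - j)‖ = ∑ x ∈ Icc (n - N) (n + N), ‖f x‖ :=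
    sum_nbij' (n - ·) (n - ·) (by intro j hj; simp only [mem_Icc] at hj ⊢; omega)
      (by intro j hj; simp only [mem_Icc] at hj ⊢; omega) (by simp) (by simp) (by simp)
  refine ⟨_, ⟨n - N, n + N, by omega, rfl⟩, mem_Icc.mpr ⟨by omega, by omega⟩, ?_⟩
  rw [hcard, ← hsum, mul_comm]
  exact (lt_inv_mul_iff₀ (by positivity)).mp hN

lemma MHL_nonneg (f : ℤ → ℂ) (n : ℤ) : 0 ≤ MHL f n :=
  Real.iSup_nonneg fun _ => by positivity

lemma avg_one (f : ℤ → ℂ) (S : Finset ℤ) : avg 1 f S = (∑ x ∈ S, ‖f x‖) / S.card := by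
  simp [avg, div_eq_inv_mul]

lemma exists_isSuperlevelComponent_MHL_le (hf : (Function.support f).Finite) {n : ℤ}
    (hn : 0 < MHL f n) :
    ∃ S, (∃ k : ℤ, IsSuperlevelComponent f (2 ^ k) S) ∧ n ∈ S ∧ MHL f n ≤ 6 * avg 1 f S := by
  obtain ⟨k, hk, hk'⟩ := exists_mem_Ioc_zpow hn (one_lt_two (α := ℝ))
  obtain ⟨S, hS, hnS⟩ :=
    exists_isSuperlevelComponent hf (by positivity) (uncenteredMaxGT_of_lt_MHL hk)
  have hdens := hS.mul_card_le (by positivity)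
  refine ⟨S, ⟨k, hS⟩, hnS, ?_⟩
  rw [avg_one, mul_div_assoc', le_div_iff₀ (by linarith [hS.one_le_card])]
  rw [zpow_add_one₀ two_ne_zero] at hk'
  nlinarith [hS.one_le_card]

open scoped Classical in
/-- Any choice of level works below; the value `0` is junk. -/
def componentLevel (f : ℤ → ℂ) (S : Finset ℤ) : ℤ :=
  if h : ∃ k : ℤ, IsSuperlevelComponent f (2 ^ k) S then h.choose else 0

open scoped Classical in
/-- The set `E_S` of the sparse family. -/
def sparsePart (f : ℤ → ℂ) (S : Finset ℤ) : Finset ℤ :=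
  S.filter fun x => ¬ UncenteredMaxGT f (16 * 2 ^ componentLevel f S) x

open scoped Classical in
lemma mem_sparsePart {S : Finset ℤ} {x : ℤ} :
    x ∈ sparsePart f S ↔ x ∈ S ∧ ¬ UncenteredMaxGT f (16 * 2 ^ componentLevel f S) x :=
  mem_filter

lemma isSuperlevelComponent_componentLevel {S : Finset ℤ}
    (h : ∃ k : ℤ, IsSuperlevelComponent f (2 ^ k) S) :
    IsSuperlevelComponent f (2 ^ componentLevel f S) S := by
  rw [componentLevel, dif_pos h]
  exact h.choose_spec

lemma card_lt_card_sparsePart {S : Finset ℤ} (h : ∃ k : ℤ, IsSuperlevelComponent f (2 ^ k) S) :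
    (1 / 8 : ℝ) * S.card < (sparsePart f S).card := by
  classical
  have hS := isSuperlevelComponent_componentLevel h
  set lam : ℝ := 2 ^ componentLevel f S
  have hlam : 0 < lam := by positivity
  -- `|S ∩ {M f > 16 lam}| ≤ 3 ‖f‖_{ℓ¹(S)} / (16 lam) ≤ 3 (|S| + 2) / 16 ≤ 9 |S| / 16`
  have hdens := hS.mul_card_filter_le (μ := 16 * lam) (by linarith) (by positivity)
  have hsplit := card_filter_add_card_filter_not (s := S) (UncenteredMaxGT f (16 * lam))
  have hsplit' : ((S.filter (UncenteredMaxGT f (16 * lam))).card : ℝ) + (sparsePart f S).card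
      = S.card := by exact_mod_cast hsplit
  nlinarith [hS.sum_le, hS.one_le_card]

lemma componentLevel_lt_of_mem_sparsePart {S S' : Finset ℤ}
    (h' : ∃ k : ℤ, IsSuperlevelComponent f (2 ^ k) S') {x : ℤ} (hx : x ∈ sparsePart f S)
    (hx' : x ∈ sparsePart f S') : componentLevel f S' < componentLevel f S + 4 := by
  obtain ⟨a, b, -, rfl, hP, -⟩ := isSuperlevelComponent_componentLevel h'
  have hxP := hP x (mem_sparsePart.mp hx').1
  have hxP' := (mem_sparsePart.mp hx).2
  rw [← zpow_lt_zpow_iff_right₀ (one_lt_two (α := ℝ)), zpow_add₀ two_ne_zero]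
  by_contra! hle
  exact hxP' (hxP.mono (by norm_num at hle ⊢; linarith))

lemma card_filter_mem_sparsePart_le {𝒮 : Finset (Finset ℤ)}
    (h𝒮 : ∀ S ∈ 𝒮, ∃ k : ℤ, IsSuperlevelComponent f (2 ^ k) S) (x : ℤ) :
    (𝒮.filter fun S => x ∈ sparsePart f S).card ≤ 7 := by
  set A := 𝒮.filter fun S => x ∈ sparsePart f S
  rcases A.eq_empty_or_nonempty with hA | ⟨S₀, hS₀⟩
  · simp [hA]
  have hmem : ∀ S ∈ A, S ∈ 𝒮 ∧ x ∈ sparsePart f S := fun S hS => mem_filter.mp hS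
  -- Components of one level are disjoint, and the levels of the `S ∋ x` differ by less than `4`.
  have hinj : Set.InjOn (componentLevel f) A := fun S hS S' hS' heq =>
    (isSuperlevelComponent_componentLevel (h𝒮 S (hmem S hS).1)).eq_of_mem
      (heq ▸ isSuperlevelComponent_componentLevel (h𝒮 S' (hmem S' hS').1))
      (mem_sparsePart.mp (hmem S hS).2).1 (mem_sparsePart.mp (hmem S' hS').2).1
  have hrange : A.image (componentLevel f) ⊆
      Ioo (componentLevel f S₀ - 4) (componentLevel f S₀ + 4) := by
    intro k hk
    obtain ⟨S, hS, rfl⟩ := mem_image.mp hk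
    have h1 := componentLevel_lt_of_mem_sparsePart (h𝒮 S (hmem S hS).1) (hmem S₀ hS₀).2
      (hmem S hS).2
    have h2 := componentLevel_lt_of_mem_sparsePart (h𝒮 S₀ (hmem S₀ hS₀).1) (hmem S hS).2
      (hmem S₀ hS₀).2
    exact mem_Ioo.mpr ⟨by omega, h1⟩
  calc A.card = (A.image (componentLevel f)).card := (card_image_of_injOn hinj).symm
    _ ≤ (Ioo (componentLevel f S₀ - 4) (componentLevel f S₀ + 4)).card := card_le_card hrange
    _ = 7 := by simp only [Int.card_Ioo]; omega

lemma isSparse_sparsePart {𝒮 : Finset (Finset ℤ)}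
    (h𝒮 : ∀ S ∈ 𝒮, ∃ k : ℤ, IsSuperlevelComponent f (2 ^ k) S) :
    IsSparse (1 / 8) 𝒮 (sparsePart f) := by
  refine ⟨fun S hS => ?_, fun S hS => ⟨fun x hx => (mem_sparsePart.mp hx).1,
    card_lt_card_sparsePart (h𝒮 S hS)⟩, fun x => ?_⟩
  · obtain ⟨k, a, b, hab, rfl, -⟩ := h𝒮 S hS
    exact ⟨a, b, hab, rfl⟩
  · rw [one_div, inv_inv]
    exact_mod_cast (card_filter_mem_sparsePart_le h𝒮 x).trans (by norm_num)

lemma sum_mul_norm_le_sparseForm_image (g : ℤ → ℂ) {N : Finset ℤ} {S : ℤ → Finset ℤ}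
    {F : ℤ → ℝ} {C : ℝ} (hC : 0 ≤ C) (hS : ∀ n ∈ N, n ∈ S n ∧ F n ≤ C * avg 1 f (S n)) :
    ∑ n ∈ N, F n * ‖g n‖ ≤ C * sparseForm 1 1 (N.image S) f g := by
  classical
  have havg : ∀ n ∈ N, 0 ≤ avg 1 f (S n) := fun n _ => by
    rw [avg_one]; positivity
  calc ∑ n ∈ N, F n * ‖g n‖ ≤ ∑ n ∈ N, C * avg 1 f (S n) * ‖g n‖ := by
        gcongr with n hn; exact (hS n hn).2
    _ = ∑ I ∈ N.image S, C * avg 1 f I * ∑ n ∈ N with S n = I, ‖g n‖ := by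
        rw [← sum_fiberwise_of_maps_to fun n hn => mem_image_of_mem S hn]
        refine sum_congr rfl fun I _ => ?_
        rw [mul_sum]
        exact sum_congr rfl fun n hn => by rw [(mem_filter.mp hn).2]
    _ ≤ ∑ I ∈ N.image S, C * avg 1 f I * ∑ x ∈ I, ‖g x‖ := by
        gcongr with I hI
        · obtain ⟨n, hn, rfl⟩ := mem_image.mp hI
          exact mul_nonneg hC (havg n hn)
        · exact fun n hn => (mem_filter.mp hn).2 ▸ (hS n (mem_filter.mp hn).1).1
    _ = C * sparseForm 1 1 (N.image S) f g := by
        rw [sparseForm, mul_sum]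
        refine sum_congr rfl fun I hI => ?_
        obtain ⟨n, hn, rfl⟩ := mem_image.mp hI
        have hcard : ((S n).card : ℝ) ≠ 0 := by
          exact_mod_cast (card_pos.mpr ⟨n, (hS n hn).1⟩).ne'
        rw [avg_one g]
        field_simp

end SparseBound

open SparseBound Finset in
/-- the discrete Hardy–Littlewood maximal function satisfies a `(1,1)` sparse bound. -/
theorem sparse_bound_maximal_function :
    ∃ ρ : ℝ, 0 < ρ ∧ ρ < 1 ∧ ∃ C : ℝ, 0 < C ∧
      ∀ f g : ℤ → ℂ, (Function.support f).Finite → (Function.support g).Finite →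
        ∃ (𝒮 : Finset (Finset ℤ)) (E : Finset ℤ → Finset ℤ), IsSparse ρ 𝒮 E ∧
          ∑' n : ℤ, MHL f n * ‖g n‖ ≤ C * sparseForm 1 1 𝒮 f g := by
  refine ⟨1 / 8, by norm_num, by norm_num, 6, by norm_num, fun f g hf hg => ?_⟩
  classical
  choose! S hS using fun n (hn : 0 < MHL f n) => exists_isSuperlevelComponent_MHL_le hf hn
  set N := hg.toFinset.filter (0 < MHL f ·)
  refine ⟨N.image S, sparsePart f, isSparse_sparsePart ?_, ?_⟩
  · intro I hI
    obtain ⟨n, hn, rfl⟩ := mem_image.mp hI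
    exact (hS n (mem_filter.mp hn).2).1
  rw [tsum_eq_sum (s := N) fun n hn => ?_]
  · exact sum_mul_norm_le_sparseForm_image g (by norm_num)
      fun n hn => (hS n (mem_filter.mp hn).2).2
  · rcases eq_or_ne (g n) 0 with hg0 | hg0
    · simp [hg0]
    · have hn' : ¬ 0 < MHL f n := fun h => hn (mem_filter.mpr ⟨hg.mem_toFinset.mpr hg0, h⟩)
      simp [le_antisymm (not_lt.mp hn') (MHL_nonneg f n)]
end
end

section
/- There exist ε₀ > 0 and a constant C (depending only on ψ) such that for all 0 < ε ≤ ε₀, all integers j ≥ 1 and 1 ≤ s ≤ εj, all (A/Q, B/Q) ∈ ℛ_s, and all (α, β) with |α − A/Q| ≤ 2^{(ε−2)j} and |β − B/Q| ≤ 2^{(ε−1)j}, one has |M_j^α(β) − S(A/Q,B/Q) · U_j(α − A/Q, β − B/Q)| ≤ C · 2^{(3ε−1)j}. -/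
noncomputable section

/-- The dyadic dilate `ψ_j(t) = 2^{-j} ψ(2^{-j} t)`. -/
def psij (ψ : ℝ → ℝ) (j : ℕ) (t : ℝ) : ℝ := ((2 : ℝ) ^ j)⁻¹ * ψ (((2 : ℝ) ^ j)⁻¹ * t)

/-- The piece `M_j^α(β) = ∑_m e(α m² − β m) ψ_j(m)` of the multiplier. -/
def Mj (ψ : ℝ → ℝ) (j : ℕ) (α β : ℝ) : ℂ :=
  ∑' m : ℤ, e (α * (m : ℝ) ^ 2 - β * (m : ℝ)) * (psij ψ j (m : ℝ) : ℂ)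

/-- The continuous analogue `U_j(x,y) = ∫ e(x t² − y t) ψ_j(t) dt`. -/
def Uj (ψ : ℝ → ℝ) (j : ℕ) (x y : ℝ) : ℂ :=
  ∫ t : ℝ, e (x * t ^ 2 - y * t) * (psij ψ j t : ℂ)

/-- The complete Gauss sum `S(A/Q, B/Q)`. -/
def gSum (A B Q : ℕ) : ℂ :=
  (Q : ℂ)⁻¹ * ∑ r ∈ Finset.range Q, e ((A : ℝ) * (r : ℝ) ^ 2 / (Q : ℝ) - (B : ℝ) * (r : ℝ) / (Q : ℝ))

lemma e_add (x y : ℝ) : e (x + y) = e x * e y := by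
  simp [e, mul_add, Complex.exp_add]

lemma norm_e (x : ℝ) : ‖e x‖ = 1 := by
  simp [e, Complex.norm_exp]

lemma e_int (k : ℤ) : e k = 1 := by
  simp only [e]
  rw [show 2 * (Real.pi:ℂ) * Complex.I * (k:ℝ) = k * (2 * Real.pi * Complex.I) by push_cast; ring]
  exact Complex.exp_int_mul_two_pi_mul_I k

lemma e_add_int (x : ℝ) (k : ℤ) : e (x + k) = e x := by
  rw [e_add, e_int, mul_one]

lemma hasDerivAt_e (u : ℝ → ℝ) (u' t : ℝ) (hu : HasDerivAt u u' t) :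
    HasDerivAt (fun s => e (u s)) (2 * Real.pi * Complex.I * u' * e (u t)) t := by
  have h1 : HasDerivAt (fun s : ℝ => ((u s : ℝ) : ℂ)) (u' : ℂ) t := hu.ofReal_comp
  have h2 : HasDerivAt (fun s : ℝ => 2 * Real.pi * Complex.I * (u s : ℂ))
      (2 * Real.pi * Complex.I * u') t := h1.const_mul _
  simpa [e, mul_comm] using h2.cexp

lemma sum_Ico_split (F : ℤ → ℂ) {a b c : ℤ} (hab : a ≤ b) (hbc : b ≤ c) :
    ∑ m ∈ Finset.Ico a c, F m = ∑ m ∈ Finset.Ico a b, F m + ∑ m ∈ Finset.Ico b c, F m := by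
  rw [← Finset.Ico_union_Ico_eq_Ico hab hbc, Finset.sum_union]
  exact Finset.Ico_disjoint_Ico_consecutive a b c

lemma sum_Ico_block (F : ℤ → ℂ) (c : ℤ) (Q : ℕ) :
    ∑ m ∈ Finset.Ico c (c + Q), F m = ∑ r ∈ Finset.range Q, F (c + r) := by
  induction Q with
  | zero => simp
  | succ n ih =>
      have h1 : c + ((n+1 : ℕ):ℤ) = (c + n) + 1 := by push_cast; ring
      have hle : c ≤ c + (n:ℤ) := by omega
      rw [Finset.sum_range_succ, ← ih, h1, sum_Ico_split F hle (by omega)]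
      congr 1
      rw [show Finset.Ico (c + (n:ℤ)) (c + n + 1) = {c + (n:ℤ)} by ext x; simp; omega,
        Finset.sum_singleton]

lemma sum_Ico_mul (F : ℤ → ℂ) (a : ℤ) (Q N : ℕ) :
    ∑ m ∈ Finset.Ico a (a + Q * N), F m
      = ∑ k ∈ Finset.range N, ∑ r ∈ Finset.range Q, F (a + Q * k + r) := by
  induction N with
  | zero => simp
  | succ n ih =>
      have h2 : a + (Q:ℤ) * ((n+1 : ℕ):ℤ) = (a + Q * n) + Q := by push_cast; ring
      have hle : a ≤ a + (Q:ℤ) * n := by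
        have : (0:ℤ) ≤ (Q:ℤ) * n := by positivity
        omega
      have hle2 : a + (Q:ℤ) * n ≤ (a + Q * n) + Q := by
        have : (0:ℤ) ≤ (Q:ℤ) := by positivity
        omega
      rw [h2, sum_Ico_split F hle hle2, ih, sum_Ico_block F (a + Q * n) Q,
        Finset.sum_range_succ]

set_option maxHeartbeats 1000000 in
/-- on the major arcs, `M_j` is well approximated by the Gauss sum times
its continuous analogue. -/
theorem major_arc_approximation (ψ : ℝ → ℝ)
    (hψ : ContDiff ℝ (⊤ : ℕ∞) ψ) (hψodd : ∀ t, ψ (-t) = -ψ t)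
    (hψsupp : ∀ t, ψ t ≠ 0 → 1 / 4 ≤ |t| ∧ |t| ≤ 1)
    (hψsum : ∀ t : ℝ, 1 ≤ |t| → ∑' j : ℕ, psij ψ j t = 1 / t) :
    ∃ ε₀ : ℝ, 0 < ε₀ ∧ ∃ C : ℝ, 0 < C ∧
      ∀ ε : ℝ, 0 < ε → ε ≤ ε₀ →
        ∀ j s : ℕ, 1 ≤ j → 1 ≤ s → (s : ℝ) ≤ ε * (j : ℝ) →
          ∀ A B Q : ℕ, A < Q → B < Q → Nat.gcd A Q = 1 → Nat.gcd B Q = 1 →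
            2 ^ (s - 1) ≤ Q → Q ≤ 2 ^ s →
            ∀ α β : ℝ,
              |α - (A : ℝ) / (Q : ℝ)| ≤ (2 : ℝ) ^ ((ε - 2) * (j : ℝ)) →
              |β - (B : ℝ) / (Q : ℝ)| ≤ (2 : ℝ) ^ ((ε - 1) * (j : ℝ)) →
              ‖Mj ψ j α β -
                  gSum A B Q * Uj ψ j (α - (A : ℝ) / (Q : ℝ)) (β - (B : ℝ) / (Q : ℝ))‖ ≤
                C * (2 : ℝ) ^ ((3 * ε - 1) * (j : ℝ)) := by
  classical
  have hψc : Continuous ψ := hψ.continuous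
  have hψ0 : ∀ u : ℝ, 1 < |u| → ψ u = 0 := by
    intro u hu
    by_contra h
    have := (hψsupp u h).2
    linarith
  have hcs : HasCompactSupport ψ := by
    apply HasCompactSupport.intro (isCompact_Icc (a := (-1:ℝ)) (b := 1))
    intro x hx
    apply hψ0
    simp only [Set.mem_Icc, not_and_or, not_le] at hx
    rcases hx with h | h
    · rw [abs_of_neg (by linarith)]; linarith
    · rw [abs_of_pos (by linarith)]; linarith
  have hψ'c : Continuous (deriv ψ) := hψ.continuous_deriv (by simp)
  obtain ⟨B₁, hB₁⟩ : ∃ C, ∀ u : ℝ, |ψ u| ≤ C := by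
    obtain ⟨C, hC⟩ := hcs.exists_bound_of_continuous hψc
    exact ⟨C, fun u => by simpa [Real.norm_eq_abs] using hC u⟩
  obtain ⟨B₂, hB₂⟩ : ∃ C, ∀ u : ℝ, |deriv ψ u| ≤ C := by
    obtain ⟨C, hC⟩ := hcs.deriv.exists_bound_of_continuous hψ'c
    exact ⟨C, fun u => by simpa [Real.norm_eq_abs] using hC u⟩
  have hB₁0 : 0 ≤ B₁ := le_trans (abs_nonneg _) (hB₁ 0)
  have hB₂0 : 0 ≤ B₂ := le_trans (abs_nonneg _) (hB₂ 0)
  have hdψ0 : ∀ u : ℝ, 1 < |u| → deriv ψ u = 0 := by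
    intro u hu
    have hopen : IsOpen {v : ℝ | 1 < |v|} := isOpen_Ioi.preimage continuous_abs
    have hev : ψ =ᶠ[nhds u] (fun _ => (0:ℝ)) :=
      Filter.eventually_of_mem (hopen.mem_nhds hu) (fun v hv => hψ0 v hv)
    rw [hev.deriv_eq]
    exact deriv_const u 0
  set K : ℝ := 6 * Real.pi * B₁ + B₂ with hK
  have hK0 : 0 ≤ K := by positivity
  refine ⟨1, one_pos, 6 * K + 1, by positivity, ?_⟩
  intro ε hε hε1 j s hj hs hsej A B Q hAQ hBQ hgA hgB hQlo hQhi α β hα hβ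
  have hQ0 : 0 < Q := lt_of_le_of_lt (Nat.zero_le A) hAQ
  have hQR : (0:ℝ) < Q := by exact_mod_cast hQ0
  have hQne : (Q:ℝ) ≠ 0 := ne_of_gt hQR
  have hjR : (1:ℝ) ≤ (j:ℝ) := by exact_mod_cast hj
  have hεj : 0 < ε * (j:ℝ) := by positivity
  have hsj : s ≤ j := by
    have : (s:ℝ) ≤ (j:ℝ) := le_trans hsej (by nlinarith)
    exact_mod_cast this
  -- ℕ-side quantities
  set Tn : ℕ := 2 ^ j with hTn
  have hQTn : Q ≤ Tn := le_trans hQhi (Nat.pow_le_pow_right (by norm_num) hsj)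
  obtain ⟨N, hNQ1, hNQ2⟩ : ∃ N : ℕ, Tn + Q + 1 ≤ Q * N ∧ Q * N ≤ Tn + 2 * Q := by
    refine ⟨Tn / Q + 2, ?_, ?_⟩ <;>
    · have hdm := Nat.div_add_mod Tn Q
      have hmod := Nat.mod_lt Tn hQ0
      have hmul : Q * (Tn / Q + 2) = Q * (Tn / Q) + 2 * Q := by ring
      omega
  have h2NQ : 2 * (Q * N) ≤ 6 * Tn := by omega
  -- real-side quantities
  have hTR : ((Tn:ℕ):ℝ) = (2:ℝ) ^ (j:ℝ) := by
    rw [hTn]; push_cast; rw [Real.rpow_natCast]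
  have hTpos : (0:ℝ) < ((Tn:ℕ):ℝ) := by positivity
  set θ : ℝ := α - (A:ℝ)/(Q:ℝ) with hθ
  set η : ℝ := β - (B:ℝ)/(Q:ℝ) with hη
  set c : ℝ := ((2:ℝ) ^ j)⁻¹ with hc
  have hc0 : 0 < c := by rw [hc]; positivity
  have hcT : c * ((Tn:ℕ):ℝ) = 1 := by
    rw [hc, hTn]; push_cast; field_simp
  -- the function f and its derivative
  set f : ℝ → ℂ := fun t => e (θ * t ^ 2 - η * t) * ((psij ψ j t : ℝ) : ℂ) with hf
  have hpsijc : Continuous (psij ψ j) := by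
    show Continuous fun t : ℝ => ((2:ℝ)^j)⁻¹ * ψ (((2:ℝ)^j)⁻¹ * t)
    exact continuous_const.mul (hψc.comp (continuous_const.mul continuous_id))
  have hec : ∀ g : ℝ → ℝ, Continuous g → Continuous fun t : ℝ => e (g t) := by
    intro g hg
    exact Complex.continuous_exp.comp (continuous_const.mul (Complex.continuous_ofReal.comp hg))
  have hfc : Continuous f :=
    (hec _ (by continuity)).mul (Complex.continuous_ofReal.comp hpsijc)
  -- vanishing outside [-Tn, Tn]
  have hct : ∀ t : ℝ, ((Tn:ℕ):ℝ) < |t| → 1 < |c * t| := by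
    intro t ht
    rw [abs_mul, abs_of_pos hc0]
    calc 1 = c * Tn := hcT.symm
    _ < c * |t| := (mul_lt_mul_iff_right₀ hc0).mpr ht
  have hpz : ∀ t : ℝ, ((Tn:ℕ):ℝ) < |t| → psij ψ j t = 0 := by
    intro t ht
    show ((2:ℝ)^j)⁻¹ * ψ (((2:ℝ)^j)⁻¹ * t) = 0
    rw [← hc, hψ0 _ (hct t ht), mul_zero]
  have hdz : ∀ t : ℝ, ((Tn:ℕ):ℝ) < |t| → deriv ψ (c * t) = 0 :=
    fun t ht => hdψ0 _ (hct t ht)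
  -- derivative of f
  set f' : ℝ → ℂ := fun t =>
    2 * Real.pi * Complex.I * ((θ * (2 * t) - η : ℝ) : ℂ) * e (θ * t ^ 2 - η * t)
        * ((psij ψ j t : ℝ) : ℂ)
      + e (θ * t ^ 2 - η * t) * ((c * (deriv ψ (c * t) * c) : ℝ) : ℂ) with hf'
  have hder : ∀ t : ℝ, HasDerivAt f (f' t) t := by
    intro t
    have hu : HasDerivAt (fun t : ℝ => θ * t ^ 2 - η * t) (θ * (2 * t) - η) t := by
      have h1 := (hasDerivAt_pow 2 t).const_mul θ
      have h2 := (hasDerivAt_id t).const_mul η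
      exact (h1.sub h2).congr_deriv (by norm_num)
    have he' := hasDerivAt_e _ _ t hu
    have hψj : HasDerivAt (fun t : ℝ => ψ (c * t)) (deriv ψ (c * t) * c) t := by
      have h3 : HasDerivAt (fun t : ℝ => c * t) c t := by
        simpa using (hasDerivAt_id t).const_mul c
      exact (((hψ.differentiable (by simp)) (c * t)).hasDerivAt).comp t h3
    have hψj2 : HasDerivAt (psij ψ j) (c * (deriv ψ (c * t) * c)) t := hψj.const_mul c
    exact he'.mul hψj2.ofReal_comp
  -- bound for the derivative
  set P : ℝ := (2:ℝ) ^ ((ε - 2) * (j:ℝ)) with hP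
  set L : ℝ := K * P with hL
  have hP0 : 0 < P := Real.rpow_pos_of_pos two_pos _
  have hL0 : 0 ≤ L := by positivity
  have hH0 : (0:ℝ) < (2:ℝ) ^ ((ε - 1) * (j:ℝ)) := Real.rpow_pos_of_pos two_pos _
  have hcrpow : c = (2:ℝ) ^ (-(j:ℝ)) := by
    rw [hc, ← Real.rpow_natCast 2 j, ← Real.rpow_neg (by norm_num)]
  have hHP : (2:ℝ) ^ ((ε-1)*(j:ℝ)) * c = P := by
    rw [hcrpow, hP, ← Real.rpow_add two_pos]; congr 1; ring
  have hΘT : P * ((Tn:ℕ):ℝ) = (2:ℝ) ^ ((ε-1)*(j:ℝ)) := by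
    rw [hTR, hP, ← Real.rpow_add two_pos]; congr 1; ring
  have hc2 : c * c ≤ P := by
    rw [hcrpow, ← Real.rpow_add two_pos, hP]
    apply Real.rpow_le_rpow_of_exponent_le one_le_two
    nlinarith
  have hbound : ∀ t : ℝ, ‖f' t‖ ≤ L := by
    intro t
    rcases le_or_gt (|t|) ((Tn:ℕ):ℝ) with h | h
    · have hpsb : |psij ψ j t| ≤ c * B₁ := by
        show |((2:ℝ)^j)⁻¹ * ψ (((2:ℝ)^j)⁻¹ * t)| ≤ c * B₁
        rw [← hc, abs_mul, abs_of_pos hc0]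
        exact mul_le_mul_of_nonneg_left (hB₁ _) (le_of_lt hc0)
      have hub : |θ * (2 * t) - η| ≤ 3 * (2:ℝ) ^ ((ε-1)*(j:ℝ)) := by
        have h1 : |θ * (2 * t)| ≤ 2 * (2:ℝ) ^ ((ε-1)*(j:ℝ)) := by
          rw [abs_mul, abs_mul]
          rw [abs_of_nonneg (by norm_num : (0:ℝ) ≤ (2:ℝ))]
          calc |θ| * (2 * |t|) ≤ P * (2 * ((Tn:ℕ):ℝ)) := by
                apply mul_le_mul hα (by linarith) (by positivity) (le_of_lt hP0)
          _ = 2 * (P * ((Tn:ℕ):ℝ)) := by ring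
          _ = 2 * (2:ℝ) ^ ((ε-1)*(j:ℝ)) := by rw [hΘT]
        calc |θ * (2 * t) - η| ≤ |θ * (2 * t)| + |η| := abs_sub _ _
        _ ≤ 2 * (2:ℝ) ^ ((ε-1)*(j:ℝ)) + (2:ℝ) ^ ((ε-1)*(j:ℝ)) := add_le_add h1 hβ
        _ = 3 * (2:ℝ) ^ ((ε-1)*(j:ℝ)) := by ring
      have hnmul : ∀ x p u : ℝ, ‖2 * (Real.pi:ℂ) * Complex.I * (x:ℂ) * e u * (p:ℂ)‖
          = 2 * Real.pi * |x| * |p| := by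
        intro x p u
        rw [norm_mul, norm_mul, norm_e, mul_one]
        simp only [norm_mul, Complex.norm_real, Complex.norm_I, Real.norm_eq_abs, mul_one]
        rw [abs_of_pos Real.pi_pos]
        norm_num
      have hn1 : ‖2 * (Real.pi:ℂ) * Complex.I * ((θ * (2 * t) - η : ℝ) : ℂ)
          * e (θ * t ^ 2 - η * t) * ((psij ψ j t : ℝ) : ℂ)‖
          = 2 * Real.pi * |θ * (2 * t) - η| * |psij ψ j t| := hnmul _ _ _
      have hn2 : ‖e (θ * t ^ 2 - η * t) * ((c * (deriv ψ (c * t) * c) : ℝ) : ℂ)‖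
          = |c * (deriv ψ (c * t) * c)| := by
        rw [norm_mul, norm_e, one_mul, Complex.norm_real, Real.norm_eq_abs]
      calc ‖f' t‖ ≤ 2 * Real.pi * |θ * (2 * t) - η| * |psij ψ j t|
            + |c * (deriv ψ (c * t) * c)| := by
            rw [hf']
            refine le_trans (norm_add_le _ _) ?_
            rw [hn1, hn2]
      _ ≤ 2 * Real.pi * (3 * (2:ℝ) ^ ((ε-1)*(j:ℝ))) * (c * B₁) + (c * c) * B₂ := by
            apply add_le_add
            · apply mul_le_mul _ hpsb (abs_nonneg _) (by positivity)
              exact mul_le_mul_of_nonneg_left hub (by positivity)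
            · rw [abs_mul, abs_mul]
              rw [abs_of_pos hc0]
              calc c * (|deriv ψ (c*t)| * c) ≤ c * (B₂ * c) := by
                    apply mul_le_mul_of_nonneg_left _ (le_of_lt hc0)
                    exact mul_le_mul_of_nonneg_right (hB₂ _) (le_of_lt hc0)
              _ = (c * c) * B₂ := by ring
      _ = 6 * Real.pi * B₁ * ((2:ℝ) ^ ((ε-1)*(j:ℝ)) * c) + (c * c) * B₂ := by ring
      _ ≤ 6 * Real.pi * B₁ * P + P * B₂ := by
            apply add_le_add
            · rw [hHP]
            · exact mul_le_mul_of_nonneg_right hc2 hB₂0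
      _ = L := by rw [hL, hK]; ring
    · have h0 : f' t = 0 := by
        show (2 * (Real.pi:ℂ) * Complex.I * ((θ * (2 * t) - η : ℝ) : ℂ) * e (θ * t ^ 2 - η * t)
            * ((psij ψ j t : ℝ) : ℂ)
          + e (θ * t ^ 2 - η * t) * ((c * (deriv ψ (c * t) * c) : ℝ) : ℂ)) = 0
        rw [hpz t h, hdz t h]
        push_cast
        ring
      rw [h0, norm_zero]
      exact hL0
  have hlip : ∀ x y : ℝ, ‖f y - f x‖ ≤ L * |y - x| := by
    intro x y
    have := Convex.norm_image_sub_le_of_norm_hasDerivWithin_le (f := f) (f' := f')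
      (s := Set.univ) (fun z _ => (hder z).hasDerivWithinAt)
      (fun z _ => hbound z) convex_univ (Set.mem_univ x) (Set.mem_univ y)
    simpa [Real.norm_eq_abs] using this
  -- grid and finite-sum form of Mj
  set a : ℤ := -((Q * N : ℕ) : ℤ) with ha
  set F : ℤ → ℂ := fun m => e (α * (m:ℝ)^2 - β * (m:ℝ)) * ((psij ψ j (m:ℝ) : ℝ) : ℂ) with hF
  have hMj : Mj ψ j α β = ∑' m : ℤ, F m := rfl
  have hNQ1' : ((Tn:ℕ):ℝ) + (Q:ℝ) + 1 ≤ ((Q*N : ℕ):ℝ) := by exact_mod_cast hNQ1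
  have hFzero : ∀ m : ℤ, m ∉ Finset.Ico a (a + (Q:ℤ) * ((2 * N : ℕ):ℤ)) → F m = 0 := by
    intro m hm
    rw [Finset.mem_Ico, not_and_or, not_le, not_lt] at hm
    have hb : a + (Q:ℤ) * ((2*N : ℕ):ℤ) = ((Q*N : ℕ):ℤ) := by rw [ha]; push_cast; ring
    have habs : ((Tn:ℕ):ℝ) < |(m:ℝ)| := by
      have h1 : ((Tn:ℤ)) + 1 ≤ |m| := by
        rcases hm with hm | hm
        · rw [ha] at hm
          have hm0 : m < 0 := by
            have : (0:ℤ) ≤ ((Q*N:ℕ):ℤ) := by positivity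
            omega
          rw [abs_of_neg hm0]
          have : (Tn:ℤ) + 1 ≤ ((Q*N:ℕ):ℤ) := by exact_mod_cast Nat.le_of_lt (by omega)
          omega
        · rw [hb] at hm
          have h2 : (Tn:ℤ) + 1 ≤ ((Q*N:ℕ):ℤ) := by exact_mod_cast Nat.le_of_lt (by omega)
          rw [abs_of_nonneg (by omega : (0:ℤ) ≤ m)]
          omega
      have h2 : ((Tn:ℤ):ℝ) + 1 ≤ ((|m|:ℤ):ℝ) := by exact_mod_cast h1
      rw [Int.cast_abs] at h2
      push_cast at h2 ⊢
      linarith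
    show e (α * (m:ℝ)^2 - β * (m:ℝ)) * ((psij ψ j (m:ℝ) : ℝ) : ℂ) = 0
    rw [hpz _ habs]
    simp
  have htsum : Mj ψ j α β = ∑ m ∈ Finset.Ico a (a + (Q:ℤ) * ((2*N : ℕ):ℤ)), F m := by
    rw [hMj]
    exact tsum_eq_sum hFzero
  -- the Gauss-sum factorization of each term
  have hterm : ∀ k r : ℕ, F (a + (Q:ℤ) * k + r)
      = e ((A:ℝ)*(r:ℝ)^2/(Q:ℝ) - (B:ℝ)*(r:ℝ)/(Q:ℝ)) * f (((a + (Q:ℤ) * k + r : ℤ) : ℝ)) := by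
    intro k r
    set m : ℤ := a + (Q:ℤ) * k + r with hm
    have hmr : ((m:ℤ):ℝ) = -((Q:ℝ) * N) + Q * k + r := by rw [hm, ha]; push_cast; ring
    set D : ℤ := ((k:ℤ) - N) * (A * (m + r) - B) with hD
    have hDr : ((D:ℤ):ℝ) = ((k:ℝ) - N) * ((A:ℝ) * (((m:ℤ):ℝ) + r) - B) := by
      rw [hD]; push_cast; ring
    have key : α * ((m:ℤ):ℝ)^2 - β * ((m:ℤ):ℝ)
        = ((A:ℝ)*(r:ℝ)^2/(Q:ℝ) - (B:ℝ)*(r:ℝ)/(Q:ℝ)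
            + (θ * ((m:ℤ):ℝ)^2 - η * ((m:ℤ):ℝ))) + ((D:ℤ):ℝ) := by
      rw [hDr, hθ, hη, hmr]
      field_simp
      ring
    show e (α * ((m:ℤ):ℝ)^2 - β * ((m:ℤ):ℝ)) * ((psij ψ j ((m:ℤ):ℝ) : ℝ) : ℂ) = _
    rw [key, e_add_int, e_add]
    show _ = e ((A:ℝ)*(r:ℝ)^2/(Q:ℝ) - (B:ℝ)*(r:ℝ)/(Q:ℝ))
        * (e (θ * ((m:ℤ):ℝ)^2 - η * ((m:ℤ):ℝ)) * ((psij ψ j ((m:ℤ):ℝ) : ℝ) : ℂ))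
    ring
  set eR : ℕ → ℂ := fun r => e ((A:ℝ)*(r:ℝ)^2/(Q:ℝ) - (B:ℝ)*(r:ℝ)/(Q:ℝ)) with heR
  set S : ℕ → ℂ := fun r => ∑ k ∈ Finset.range (2*N), f (((a + (Q:ℤ) * k + r : ℤ) : ℝ)) with hS
  have hMj2 : Mj ψ j α β = ∑ r ∈ Finset.range Q, eR r * S r := by
    rw [htsum, sum_Ico_mul F a Q (2*N), Finset.sum_comm]
    apply Finset.sum_congr rfl
    intro r _
    rw [hS, Finset.mul_sum]
    apply Finset.sum_congr rfl
    intro k _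
    exact hterm k r
  -- the integral side
  set x : ℕ → ℝ := fun k => (a:ℝ) + k * Q with hx
  have hxk1 : ∀ k : ℕ, x (k+1) = x k + Q := by intro k; rw [hx]; push_cast; ring
  have hx0 : x 0 = (a:ℝ) := by rw [hx]; push_cast; ring
  have hx2N : x (2*N) = ((Q*N : ℕ):ℝ) := by rw [hx, ha]; push_cast; ring
  have hIsupp : Function.support f ⊆ Set.Ioc (x 0) (x (2*N)) := by
    intro t ht
    have hps : psij ψ j t ≠ 0 := by
      intro h0
      apply ht
      show e (θ * t ^ 2 - η * t) * ((psij ψ j t : ℝ) : ℂ) = 0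
      rw [h0]; simp
    have habs : |t| ≤ ((Tn:ℕ):ℝ) := by
      by_contra hcon
      exact hps (hpz t (lt_of_not_ge hcon))
    rw [abs_le] at habs
    rw [hx0, hx2N, ha]
    constructor
    · push_cast at hNQ1' ⊢; linarith [habs.1, hQR]
    · push_cast at hNQ1' ⊢; linarith [habs.2, hQR]
  have hUj : Uj ψ j θ η = ∫ t : ℝ, f t := rfl
  have hInt : (∫ t : ℝ, f t) = ∑ k ∈ Finset.range (2*N), ∫ t in x k..x (k+1), f t := by
    rw [intervalIntegral.sum_integral_adjacent_intervals
      (fun k _ => hfc.intervalIntegrable _ _)]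
    exact (intervalIntegral.integral_eq_integral_of_support_subset hIsupp).symm
  -- per-interval estimate
  have hptk : ∀ r k : ℕ, r < Q →
      ‖f (((a + (Q:ℤ)*k + r : ℤ):ℝ)) - (Q:ℂ)⁻¹ * ∫ t in x k..x (k+1), f t‖ ≤ L * Q := by
    intro r k hr
    set p : ℝ := ((a + (Q:ℤ)*k + r : ℤ):ℝ) with hp
    have hpx : p = x k + r := by rw [hp, hx]; push_cast; ring
    have hrQ : (r:ℝ) < (Q:ℝ) := by exact_mod_cast hr
    have hQsmul : (∫ _ in x k..x (k+1), f p) = (Q:ℂ) * f p := by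
      rw [intervalIntegral.integral_const, hxk1 k]
      have h9 : x k + (Q:ℝ) - x k = (Q:ℝ) := by ring
      rw [h9, Complex.real_smul]
      push_cast
      ring
    have hsub : (∫ t in x k..x (k+1), (f p - f t))
        = (Q:ℂ) * f p - ∫ t in x k..x (k+1), f t := by
      rw [intervalIntegral.integral_sub (intervalIntegrable_const)
        (hfc.intervalIntegrable _ _), hQsmul]
    have hbnd : ∀ t ∈ Set.uIoc (x k) (x (k+1)), ‖f p - f t‖ ≤ L * Q := by
      intro t ht
      rw [Set.uIoc_of_le (by rw [hxk1 k]; linarith)] at ht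
      obtain ⟨ht1, ht2⟩ := ht
      rw [hxk1 k] at ht2
      have hpt : |p - t| ≤ (Q:ℝ) := by
        rw [abs_le]
        constructor
        · rw [hpx]; have : (0:ℝ) ≤ (r:ℝ) := by positivity
          linarith
        · rw [hpx]; linarith
      calc ‖f p - f t‖ ≤ L * |p - t| := hlip t p
      _ ≤ L * Q := mul_le_mul_of_nonneg_left hpt hL0
    have h1 : ‖(Q:ℂ) * f p - ∫ t in x k..x (k+1), f t‖ ≤ L * Q * Q := by
      rw [← hsub]
      refine le_trans (intervalIntegral.norm_integral_le_of_norm_le_const hbnd) ?_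
      rw [hxk1 k]
      have : |x k + (Q:ℝ) - x k| = (Q:ℝ) := by
        rw [show x k + (Q:ℝ) - x k = (Q:ℝ) by ring, abs_of_pos hQR]
      rw [this]
    have hqinv : f p - (Q:ℂ)⁻¹ * ∫ t in x k..x (k+1), f t
        = (Q:ℂ)⁻¹ * ((Q:ℂ) * f p - ∫ t in x k..x (k+1), f t) := by
      have hQC : (Q:ℂ) ≠ 0 := by exact_mod_cast hQne
      field_simp
    rw [hqinv, norm_mul]
    have hnq : ‖(Q:ℂ)⁻¹‖ = (Q:ℝ)⁻¹ := by
      rw [norm_inv, Complex.norm_natCast]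
    rw [hnq]
    calc (Q:ℝ)⁻¹ * ‖(Q:ℂ) * f p - ∫ t in x k..x (k+1), f t‖
        ≤ (Q:ℝ)⁻¹ * (L * Q * Q) := mul_le_mul_of_nonneg_left h1 (by positivity)
    _ = L * Q := by field_simp
  -- bracket per residue
  have hbr : ∀ r : ℕ, r < Q → ‖S r - (Q:ℂ)⁻¹ * ∫ t : ℝ, f t‖ ≤ (2*N : ℕ) * (L * Q) := by
    intro r hr
    rw [hS, hInt, Finset.mul_sum, ← Finset.sum_sub_distrib]
    refine le_trans (norm_sum_le _ _) ?_
    calc ∑ k ∈ Finset.range (2*N),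
          ‖f (((a + (Q:ℤ)*k + r : ℤ):ℝ)) - (Q:ℂ)⁻¹ * ∫ t in x k..x (k+1), f t‖
        ≤ ∑ _k ∈ Finset.range (2*N), L * Q :=
          Finset.sum_le_sum (fun k _ => hptk r k hr)
    _ = (2*N : ℕ) * (L * Q) := by
          rw [Finset.sum_const, Finset.card_range, nsmul_eq_mul]
  -- assemble
  have hgs : gSum A B Q = (Q:ℂ)⁻¹ * ∑ r ∈ Finset.range Q, eR r := rfl
  have hgU : gSum A B Q * Uj ψ j θ η
      = ∑ r ∈ Finset.range Q, eR r * ((Q:ℂ)⁻¹ * ∫ t : ℝ, f t) := by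
    rw [hgs, hUj, Finset.mul_sum, Finset.sum_mul]
    apply Finset.sum_congr rfl
    intro r _
    ring
  have hdiff : Mj ψ j α β - gSum A B Q * Uj ψ j θ η
      = ∑ r ∈ Finset.range Q, eR r * (S r - (Q:ℂ)⁻¹ * ∫ t : ℝ, f t) := by
    rw [hMj2, hgU, ← Finset.sum_sub_distrib]
    apply Finset.sum_congr rfl
    intro r _
    ring
  rw [hdiff]
  refine le_trans (norm_sum_le _ _) ?_
  have hperR : ∀ r ∈ Finset.range Q,
      ‖eR r * (S r - (Q:ℂ)⁻¹ * ∫ t : ℝ, f t)‖ ≤ (2*N : ℕ) * (L * Q) := by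
    intro r hr
    rw [norm_mul]
    have h2 : ‖eR r‖ = 1 := norm_e _
    rw [h2, one_mul]
    exact hbr r (Finset.mem_range.mp hr)
  calc ∑ r ∈ Finset.range Q, ‖eR r * (S r - (Q:ℂ)⁻¹ * ∫ t : ℝ, f t)‖
      ≤ ∑ _r ∈ Finset.range Q, ((2*N : ℕ) * (L * Q) : ℝ) := Finset.sum_le_sum hperR
  _ = (Q:ℝ) * ((2*N : ℕ) * (L * Q)) := by
        rw [Finset.sum_const, Finset.card_range, nsmul_eq_mul]
  _ = L * (((2*N : ℕ):ℝ) * Q) * Q := by ring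
  _ ≤ (6 * K + 1) * (2:ℝ) ^ ((3 * ε - 1) * (j:ℝ)) := by
        have h2NQ' : ((2*N : ℕ):ℝ) * Q ≤ 6 * ((Tn:ℕ):ℝ) := by
          have hcomm : 2*N*Q = 2*(Q*N) := by ring
          have : ((2*N*Q : ℕ):ℝ) ≤ ((6*Tn : ℕ):ℝ) := by
            exact_mod_cast (by omega : 2*N*Q ≤ 6*Tn)
          push_cast at this ⊢
          linarith
        have hQrpow : (Q:ℝ) ≤ (2:ℝ) ^ (ε * (j:ℝ)) := by
          calc (Q:ℝ) ≤ ((2^s : ℕ):ℝ) := by exact_mod_cast hQhi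
          _ = (2:ℝ) ^ ((s:ℕ):ℝ) := by push_cast; rw [Real.rpow_natCast]
          _ ≤ (2:ℝ) ^ (ε * (j:ℝ)) := Real.rpow_le_rpow_of_exponent_le one_le_two hsej
        have step1 : L * (((2*N : ℕ):ℝ) * Q) * Q
            ≤ L * (6 * ((Tn:ℕ):ℝ)) * (2:ℝ) ^ (ε * (j:ℝ)) := by
          apply mul_le_mul
          · exact mul_le_mul_of_nonneg_left h2NQ' hL0
          · exact hQrpow
          · positivity
          · positivity
        have step2 : L * (6 * ((Tn:ℕ):ℝ)) * (2:ℝ) ^ (ε * (j:ℝ))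
            = 6 * K * ((2:ℝ) ^ ((ε-1) * (j:ℝ)) * (2:ℝ) ^ (ε * (j:ℝ))) := by
          rw [hL]
          rw [show K * P * (6 * ((Tn:ℕ):ℝ)) * (2:ℝ) ^ (ε * (j:ℝ))
            = 6 * K * ((P * ((Tn:ℕ):ℝ)) * (2:ℝ) ^ (ε * (j:ℝ))) by ring, hΘT]
        have step3 : (2:ℝ) ^ ((ε-1) * (j:ℝ)) * (2:ℝ) ^ (ε * (j:ℝ))
            = (2:ℝ) ^ ((2*ε - 1) * (j:ℝ)) := by
          rw [← Real.rpow_add two_pos]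
          congr 1
          ring
        have step4 : (2:ℝ) ^ ((2*ε-1) * (j:ℝ)) ≤ (2:ℝ) ^ ((3*ε-1) * (j:ℝ)) := by
          apply Real.rpow_le_rpow_of_exponent_le one_le_two
          nlinarith
        calc L * (((2*N : ℕ):ℝ) * Q) * Q
            ≤ 6 * K * ((2:ℝ) ^ ((2*ε-1) * (j:ℝ))) := by rw [← step3, ← step2]; exact step1
        _ ≤ (6 * K + 1) * (2:ℝ) ^ ((3*ε-1) * (j:ℝ)) := by
            apply mul_le_mul (by linarith) step4 (by positivity) (by linarith)
end
end

section
/- Let 1 ≤ r, s < ∞ and let s' = s/(s−1) be the conjugate exponent of s (s' = ∞ if s = 1). There exist ρ ∈ (0,1) and C > 0, depending only on r and s, such that: if N ≥ 1 and K : ℤ → ℂ is supported in [−N, N], and A is a constant with ‖K * f‖_{ℓ^{s'}} ≤ A ‖f‖_{ℓ^r} for all finitely supported f, then for all finitely supported f, g : ℤ → ℂ there is a ρ-sparse collection 𝒮 with |⟨K * f, g⟩| ≤ C · N^{1/r + 1/s − 1} · A · Λ_{𝒮,r,s}(f,g). -/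
/-!
Cut `ℤ` into blocks `I_j = [jL, (j+1)L)` with `L = ⌈N⌉`, and let `S_j` be the interval of length
`3L` whose middle third is `I_j`. Since `K` is supported in `[-L, L]`, on `I_j` the convolution
`K * f` only sees `f 1_{S_j}`, so Hölder's inequality and the operator bound give
`∑_{I_j} |K * f| |g| ≤ A ‖f 1_{S_j}‖_r ‖g 1_{S_j}‖_s = A ⟨f⟩_{S_j,r} ⟨g⟩_{S_j,s} |S_j|^{1/r+1/s}`,
and `|S_j|^{1/r+1/s-1} ≤ 6 N^{1/r+1/s-1}` because `N ≤ 3L ≤ 6N` and `1/r + 1/s - 1 ≤ 1`.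
The intervals `S_j` for the blocks meeting the support of `g` are `1/4`-sparse: their disjoint
middle thirds serve as the sets `E_S`.
-/

noncomputable section

/-- Convolution of a kernel with a finitely supported function on `ℤ`. -/
def conv (K f : ℤ → ℂ) (x : ℤ) : ℂ := ∑' n : ℤ, K n * f (x - n)

/-- The `ℓ^p` norm of a function on `ℤ` (for finite `p`). -/
def lpNorm (p : ℝ) (F : ℤ → ℂ) : ℝ := (∑' x : ℤ, ‖F x‖ ^ p) ^ (1 / p)

open Finset Function
open scoped Pointwise

section LpNorm

variable {p : ℝ} {F : ℤ → ℂ}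

lemma lpNorm_nonneg (p : ℝ) (F : ℤ → ℂ) : 0 ≤ lpNorm p F :=
  Real.rpow_nonneg (tsum_nonneg fun _ => by positivity) _

lemma lpNorm_eq_of_support_subset (hp : 0 < p) {T : Finset ℤ} (hF : support F ⊆ T) :
    lpNorm p F = (∑ x ∈ T, ‖F x‖ ^ p) ^ (1 / p) := by
  rw [lpNorm, tsum_eq_sum fun x hx => ?_]
  rw [notMem_support.mp fun h => hx (hF h), norm_zero, Real.zero_rpow hp.ne']

lemma lpNorm_single (hp : 0 < p) (a : ℤ) (c : ℂ) : lpNorm p (Pi.single a c) = ‖c‖ := by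
  rw [lpNorm_eq_of_support_subset hp (T := {a}) (by simpa using Pi.support_single_subset),
    sum_singleton, Pi.single_eq_same, one_div, Real.rpow_rpow_inv (norm_nonneg _) hp.ne']

lemma lpNorm_indicator (hp : 0 < p) (S : Finset ℤ) (f : ℤ → ℂ) :
    lpNorm p ((S : Set ℤ).indicator f) = (∑ x ∈ S, ‖f x‖ ^ p) ^ (1 / p) := by
  rw [lpNorm_eq_of_support_subset hp Set.support_indicator_subset]
  congr 1
  exact sum_congr rfl fun x hx => by rw [Set.indicator_of_mem (mem_coe.2 hx)]

lemma sum_rpow_rpow_le_lpNorm (hp : 0 < p) (hF : (support F).Finite) (I : Finset ℤ) :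
    (∑ x ∈ I, ‖F x‖ ^ p) ^ (1 / p) ≤ lpNorm p F := by
  have hsum : Summable fun x => ‖F x‖ ^ p := by
    refine summable_of_hasFiniteSupport (hF.subset fun x hx => mem_support.2 fun h => hx ?_)
    simp [h, Real.zero_rpow hp.ne']
  exact Real.rpow_le_rpow (by positivity) (hsum.sum_le_tsum I fun _ _ => by positivity)
    (by positivity)

lemma avg_nonneg (p : ℝ) (f : ℤ → ℂ) (S : Finset ℤ) : 0 ≤ avg p f S :=
  Real.rpow_nonneg (by positivity) _

lemma avg_mul_card_rpow (f : ℤ → ℂ) (S : Finset ℤ) :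
    avg p f S * (S.card : ℝ) ^ (1 / p) = (∑ x ∈ S, ‖f x‖ ^ p) ^ (1 / p) := by
  rw [avg, ← Real.mul_rpow (by positivity) (by positivity)]
  rcases S.eq_empty_or_nonempty with rfl | hS
  · simp
  · have : (S.card : ℝ) ≠ 0 := by positivity
    field_simp

end LpNorm

lemma support_conv_subset (K f : ℤ → ℂ) : support (conv K f) ⊆ support K + support f := by
  intro x hx
  obtain ⟨n, hn⟩ : ∃ n, K n * f (x - n) ≠ 0 := by
    by_contra! h
    exact hx (by simp [conv, h])
  exact ⟨n, left_ne_zero_of_mul hn, x - n, right_ne_zero_of_mul hn, by ring⟩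

lemma conv_eq_conv_indicator {K f : ℤ → ℂ} {x : ℤ} {S : Set ℤ}
    (h : ∀ n, K n ≠ 0 → x - n ∈ S) :
    conv K f x = conv K (S.indicator f) x := by
  refine tsum_congr fun n => ?_
  by_cases hn : K n = 0
  · simp [hn]
  · rw [Set.indicator_of_mem (h n hn)]

def HasConvBound (r s : ℝ) (K : ℤ → ℂ) (A : ℝ) : Prop :=
  (s = 1 → ∀ f : ℤ → ℂ, (support f).Finite → ∀ x, ‖conv K f x‖ ≤ A * lpNorm r f) ∧
  (s ≠ 1 → ∀ f : ℤ → ℂ, (support f).Finite → lpNorm (s / (s - 1)) (conv K f) ≤ A * lpNorm r f)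

namespace HasConvBound

variable {r s A : ℝ} {K : ℤ → ℂ}

lemma nonneg (hr : 0 < r) (h : HasConvBound r s K A) : 0 ≤ A := by
  have hδ : (support (Pi.single 0 1 : ℤ → ℂ)).Finite :=
    (Set.finite_singleton 0).subset Pi.support_single_subset
  have hnorm : lpNorm r (Pi.single 0 1 : ℤ → ℂ) = 1 := by rw [lpNorm_single hr, norm_one]
  rcases eq_or_ne s 1 with hs | hs
  · simpa [hnorm] using (norm_nonneg _).trans (h.1 hs _ hδ 0)
  · simpa [hnorm] using (lpNorm_nonneg _ _).trans (h.2 hs _ hδ)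

lemma sum_norm_mul_le (hs : 1 ≤ s) (h : HasConvBound r s K A) (hK : (support K).Finite)
    {φ : ℤ → ℂ} (hφ : (support φ).Finite) (g : ℤ → ℂ) (I : Finset ℤ) :
    ∑ x ∈ I, ‖conv K φ x‖ * ‖g x‖ ≤ A * lpNorm r φ * (∑ x ∈ I, ‖g x‖ ^ s) ^ (1 / s) := by
  rcases eq_or_ne s 1 with rfl | hs1
  · simp only [Real.rpow_one, div_one, mul_sum]
    exact sum_le_sum fun x _ => mul_le_mul_of_nonneg_right (h.1 rfl φ hφ x) (norm_nonneg _)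
  · have hconj : (s / (s - 1)).HolderConjugate s :=
      (Real.HolderConjugate.conjExponent (hs.lt_of_ne' hs1)).symm
    have hconv : (support (conv K φ)).Finite := (hK.add hφ).subset (support_conv_subset K φ)
    calc ∑ x ∈ I, ‖conv K φ x‖ * ‖g x‖
        ≤ (∑ x ∈ I, ‖conv K φ x‖ ^ (s / (s - 1))) ^ (1 / (s / (s - 1))) *
            (∑ x ∈ I, ‖g x‖ ^ s) ^ (1 / s) := by
          simpa only [abs_norm] using
            Real.inner_le_Lp_mul_Lq I (fun x => ‖conv K φ x‖) (fun x => ‖g x‖) hconj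
      _ ≤ A * lpNorm r φ * (∑ x ∈ I, ‖g x‖ ^ s) ^ (1 / s) := by
          gcongr
          exact (sum_rpow_rpow_le_lpNorm hconj.pos hconv I).trans (h.2 hs1 φ hφ)

lemma sum_norm_mul_le_avg (hr : 0 < r) (hs : 1 ≤ s) (h : HasConvBound r s K A)
    (hK : (support K).Finite) {T S : Finset ℤ} (hTS : T ⊆ S)
    (hloc : ∀ x ∈ T, ∀ n, K n ≠ 0 → x - n ∈ S) (f g : ℤ → ℂ) :
    ∑ x ∈ T, ‖conv K f x‖ * ‖g x‖ ≤
      A * avg r f S * avg s g S * (S.card : ℝ) ^ (1 / r + 1 / s) := by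
  have hA := h.nonneg hr
  have hfS : (support ((S : Set ℤ).indicator f)).Finite :=
    S.finite_toSet.subset Set.support_indicator_subset
  calc ∑ x ∈ T, ‖conv K f x‖ * ‖g x‖
      = ∑ x ∈ T, ‖conv K ((S : Set ℤ).indicator f) x‖ * ‖g x‖ :=
        sum_congr rfl fun x hx => by rw [conv_eq_conv_indicator (hloc x hx)]
    _ ≤ A * lpNorm r ((S : Set ℤ).indicator f) * (∑ x ∈ T, ‖g x‖ ^ s) ^ (1 / s) :=
        h.sum_norm_mul_le hs hK hfS g T
    _ ≤ A * lpNorm r ((S : Set ℤ).indicator f) * (∑ x ∈ S, ‖g x‖ ^ s) ^ (1 / s) := by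
        have := lpNorm_nonneg r ((S : Set ℤ).indicator f)
        gcongr
    _ = A * avg r f S * avg s g S * (S.card : ℝ) ^ (1 / r + 1 / s) := by
        rw [lpNorm_indicator hr, ← avg_mul_card_rpow, ← avg_mul_card_rpow,
          Real.rpow_add' (by positivity) (by positivity)]
        ring

end HasConvBound

def block (L : ℕ) (j : ℤ) : Finset ℤ := Icc (j * L) (j * L + L - 1)

def tripleBlock (L : ℕ) (j : ℤ) : Finset ℤ := Icc (j * L - L) (j * L + 2 * L - 1)

def interiorBy (L : ℕ) (S : Finset ℤ) : Finset ℤ := S.filter fun x => x - L ∈ S ∧ x + L ∈ S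

section Blocks

variable {L : ℕ} {j : ℤ}

lemma mem_block_iff (hL : 0 < L) {x : ℤ} : x ∈ block L j ↔ x / L = j := by
  rw [block, mem_Icc, Int.ediv_eq_iff_of_pos (by omega)]
  omega

lemma card_block : (block L j).card = L := by
  rw [block, Int.card_Icc]
  omega

lemma card_tripleBlock : (tripleBlock L j).card = 3 * L := by
  rw [tripleBlock, Int.card_Icc]
  omega

lemma block_subset_tripleBlock : block L j ⊆ tripleBlock L j := by
  intro x hx
  rw [block, mem_Icc] at hx
  rw [tripleBlock, mem_Icc]
  omega

lemma interiorBy_tripleBlock : interiorBy L (tripleBlock L j) = block L j := by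
  ext x
  simp only [interiorBy, tripleBlock, block, mem_filter, mem_Icc]
  omega

lemma sub_mem_tripleBlock {x n : ℤ} (hx : x ∈ block L j) (hn : |n| ≤ L) :
    x - n ∈ tripleBlock L j := by
  rw [block, mem_Icc] at hx
  rw [tripleBlock, mem_Icc]
  rw [abs_le] at hn
  omega

lemma tripleBlock_injective (hL : 0 < L) : Injective (tripleBlock L) := by
  intro j k h
  have hj : j * L ∈ block L k := by
    rw [← interiorBy_tripleBlock, ← h, interiorBy_tripleBlock, block, mem_Icc]
    omega
  rwa [mem_block_iff hL, Int.mul_ediv_cancel _ (by omega)] at hj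

lemma isSparse_image_tripleBlock (hL : 0 < L) (J : Finset ℤ) :
    IsSparse (1 / 4) (J.image (tripleBlock L)) (interiorBy L) := by
  refine ⟨?_, ?_, fun x => ?_⟩
  · simp only [mem_image, forall_exists_index, and_imp]
    rintro _ j _ rfl
    exact ⟨_, _, by omega, rfl⟩
  · simp only [mem_image, forall_exists_index, and_imp]
    rintro _ j _ rfl
    refine ⟨filter_subset _ _, ?_⟩
    rw [interiorBy_tripleBlock, card_block, card_tripleBlock]
    have : (0 : ℝ) < L := by exact_mod_cast hL
    push_cast
    linarith
  · have hsub : (J.image (tripleBlock L)).filter (fun S => x ∈ interiorBy L S) ⊆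
        {tripleBlock L (x / L)} := by
      intro S hS
      simp only [mem_filter, mem_image] at hS
      obtain ⟨⟨j, -, rfl⟩, hx⟩ := hS
      rw [interiorBy_tripleBlock, mem_block_iff hL] at hx
      rw [hx, mem_singleton]
    calc _ ≤ (1 : ℝ) := by exact_mod_cast (card_le_card hsub).trans (card_singleton _).le
      _ ≤ (1 / 4)⁻¹ := by norm_num

end Blocks

lemma norm_pairing_le_sum_fiberwise {F g : ℤ → ℂ} (hg : (support g).Finite) (π : ℤ → ℤ) :
    ‖pairing F g‖ ≤ ∑ j ∈ hg.toFinset.image π, ∑ x ∈ hg.toFinset with π x = j, ‖F x‖ * ‖g x‖ := by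
  rw [pairing, tsum_eq_sum (s := hg.toFinset) fun x hx => ?_,
    ← sum_fiberwise_of_maps_to fun x hx => mem_image_of_mem π hx]
  · refine (norm_sum_le _ _).trans (sum_le_sum fun j _ => (norm_sum_le _ _).trans_eq ?_)
    simp only [norm_mul, RCLike.norm_conj]
  · rw [Set.Finite.mem_toFinset, mem_support, not_not] at hx
    simp [hx]

lemma rpow_le_mul_rpow {N c k ε : ℝ} (hN : 0 < N) (hk : 1 ≤ k) (hNc : N ≤ c) (hck : c ≤ k * N)
    (hε : ε ≤ 1) : c ^ ε ≤ k * N ^ ε := by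
  rcases le_or_gt 0 ε with h0 | h0
  · calc c ^ ε ≤ (k * N) ^ ε := Real.rpow_le_rpow (by linarith) hck h0
      _ = k ^ ε * N ^ ε := Real.mul_rpow (by linarith) hN.le
      _ ≤ k * N ^ ε := by
          gcongr
          simpa using Real.rpow_le_rpow_of_exponent_le hk hε
  · calc c ^ ε ≤ N ^ ε := Real.rpow_le_rpow_of_nonpos hN hNc h0.le
      _ ≤ k * N ^ ε := le_mul_of_one_le_left (by positivity) hk

lemma card_tripleBlock_ceil_rpow_le {N r s : ℝ} (hN : 1 ≤ N) (hr : 1 ≤ r) (hs : 1 ≤ s) (j : ℤ) :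
    ((tripleBlock ⌈N⌉₊ j).card : ℝ) ^ (1 / r + 1 / s) ≤
      6 * N ^ (1 / r + 1 / s - 1) * (tripleBlock ⌈N⌉₊ j).card := by
  have hceil : (⌈N⌉₊ : ℝ) < N + 1 := Nat.ceil_lt_add_one (by linarith)
  have hε : 1 / r + 1 / s - 1 ≤ 1 := by
    have := (div_le_one (by linarith)).2 hr
    have := (div_le_one (by linarith)).2 hs
    linarith
  have hc : (0 : ℝ) < 3 * ⌈N⌉₊ := by positivity
  rw [card_tripleBlock]
  push_cast
  calc (3 * ⌈N⌉₊ : ℝ) ^ (1 / r + 1 / s)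
      = (3 * ⌈N⌉₊ : ℝ) ^ (1 / r + 1 / s - 1) * (3 * ⌈N⌉₊) := by
        rw [← Real.rpow_add_one hc.ne']
        ring_nf
    _ ≤ 6 * N ^ (1 / r + 1 / s - 1) * (3 * ⌈N⌉₊) := by
        gcongr
        exact rpow_le_mul_rpow (by linarith) (by norm_num) (by linarith [Nat.le_ceil N])
          (by linarith) hε

/-- an `ℓ^r → ℓ^{s'}` bound for convolution with a kernel supported in `[−N, N]`
implies an `(r,s)` sparse bound with constant `N^{1/r + 1/s − 1}` times the operator norm. -/
theorem sparse_bound_from_operator_norm (r s : ℝ) (hr : 1 ≤ r) (hs : 1 ≤ s) :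
    ∃ ρ : ℝ, 0 < ρ ∧ ρ < 1 ∧ ∃ C : ℝ, 0 < C ∧
      ∀ N : ℝ, 1 ≤ N → ∀ K : ℤ → ℂ, (∀ n : ℤ, K n ≠ 0 → (|n| : ℝ) ≤ N) →
        ∀ A : ℝ,
          (s = 1 → ∀ f : ℤ → ℂ, (Function.support f).Finite →
              ∀ x : ℤ, ‖conv K f x‖ ≤ A * lpNorm r f) →
          (s ≠ 1 → ∀ f : ℤ → ℂ, (Function.support f).Finite →
              lpNorm (s / (s - 1)) (conv K f) ≤ A * lpNorm r f) →
          ∀ f g : ℤ → ℂ, (Function.support f).Finite → (Function.support g).Finite →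
            ∃ (𝒮 : Finset (Finset ℤ)) (E : Finset ℤ → Finset ℤ), IsSparse ρ 𝒮 E ∧
              ‖pairing (conv K f) g‖ ≤
                C * N ^ (1 / r + 1 / s - 1) * A * sparseForm r s 𝒮 f g := by
  refine ⟨1 / 4, by norm_num, by norm_num, 6, by norm_num, ?_⟩
  intro N hN K hKN A h1 h2 f g _ hg
  have hA : HasConvBound r s K A := ⟨h1, h2⟩
  set L := ⌈N⌉₊
  have hL : 0 < L := Nat.ceil_pos.2 (by linarith)
  have hKL : ∀ n, K n ≠ 0 → |n| ≤ (L : ℤ) := fun n hn => by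
    exact_mod_cast (hKN n hn).trans (Nat.le_ceil N)
  have hK : (support K).Finite :=
    (Set.finite_Icc (-(L : ℤ)) L).subset fun n hn => abs_le.1 (hKL n hn)
  refine ⟨(hg.toFinset.image (· / (L : ℤ))).image (tripleBlock L), interiorBy L,
    isSparse_image_tripleBlock hL _, ?_⟩
  rw [sparseForm, sum_image (tripleBlock_injective hL).injOn, mul_sum]
  refine (norm_pairing_le_sum_fiberwise hg _).trans (sum_le_sum fun j _ => ?_)
  have hblock : ∀ x ∈ hg.toFinset.filter (· / (L : ℤ) = j), x ∈ block L j :=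
    fun x hx => (mem_block_iff hL).2 (mem_filter.1 hx).2
  set S := tripleBlock L j
  have hAfg : 0 ≤ A * avg r f S * avg s g S :=
    mul_nonneg (mul_nonneg (hA.nonneg (by linarith)) (avg_nonneg r f S)) (avg_nonneg s g S)
  calc _ ≤ A * avg r f S * avg s g S * (S.card : ℝ) ^ (1 / r + 1 / s) :=
        hA.sum_norm_mul_le_avg (by linarith) hs hK
          (fun x hx => block_subset_tripleBlock (hblock x hx))
          (fun x hx n hn => sub_mem_tripleBlock (hblock x hx) (hKL n hn)) f g
    _ ≤ A * avg r f S * avg s g S * (6 * N ^ (1 / r + 1 / s - 1) * S.card) :=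
        mul_le_mul_of_nonneg_left (card_tripleBlock_ceil_rpow_le hN hr hs j) hAfg
    _ = _ := by ring
end
end
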